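/- Let S be an epigroup and U, V ∈ S with U·V = V². If m is a natural number such that both U^m and V^m are group elements, then U^ω·V^s = V^s for every s ≥ m. -/
import Mathlib


section EpigroupDefs

variable {S : Type*}

/-- `spow x n` is the semigroup power `x^(n+1)` (so `spow x 0 = x`). -/
def spow [Semigroup S] (x : S) : ℕ → S
  | 0 => x
  | n + 1 => spow x n * x

/-- An element of a semigroup is a *group element* if it lies in some subgroup:
a subset closed under multiplication, with a two-sided identity and inverses. -/
def IsGroupElement [Semigroup S] (a : S) : Prop :=
  ∃ (H : Set S) (e : S), a ∈ H ∧ e ∈ H ∧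
    (∀ u ∈ H, ∀ v ∈ H, u * v ∈ H) ∧
    (∀ u ∈ H, e * u = u ∧ u * e = u) ∧
    (∀ u ∈ H, ∃ v ∈ H, u * v = e ∧ v * u = e)

/-- An *epigroup*: a semigroup in which some power of every element is a group
element, equipped with the pseudoinversion `pinv`.  The pseudoinverse `x̄` (the
inverse of `x * x^ω` in the maximal subgroup containing a power of `x`) is
characterized by the listed equational properties: `x x̄ = x̄ x`,
`x̄ x x̄ = x̄`, and `x̄ x^(n+1) = x^n` for some `n`. -/
class Epigroup (S : Type*) extends Semigroup S where
  pinv : S → S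
  pow_isGroupElement : ∀ x : S, ∃ n : ℕ, IsGroupElement (spow x n)
  mul_pinv_comm : ∀ x : S, x * pinv x = pinv x * x
  pinv_mul_mul_pinv : ∀ x : S, pinv x * x * pinv x = pinv x
  pinv_spow : ∀ x : S, ∃ n : ℕ, pinv x * spow x (n + 1) = spow x n

open Epigroup

/-- `x^ω = x * x̄`, the identity element of the maximal subgroup containing a
power of `x`. -/
def eomega [Epigroup S] (x : S) : S := x * pinv x

end EpigroupDefs

open Epigroup

section AuxLemmas

variable {S : Type*}

lemma spow_succ' [Semigroup S] (x : S) : ∀ n, spow x (n + 1) = x * spow x n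
  | 0 => rfl
  | n + 1 => by
    show spow x (n + 1) * x = x * spow x (n + 1)
    conv_lhs => rw [spow_succ' x n, mul_assoc]
    rfl

lemma spow_add [Semigroup S] (x : S) (a : ℕ) :
    ∀ b, spow x a * spow x b = spow x (a + b + 1)
  | 0 => rfl
  | b + 1 => by
    show spow x a * (spow x b * x) = spow x (a + (b + 1) + 1)
    rw [← mul_assoc, spow_add x a b]
    rfl

lemma spow_nest [Semigroup S] (x : S) (p : ℕ) :
    ∀ k, spow (spow x p) k = spow x ((p + 1) * k + p)
  | 0 => by
    have hp : (p + 1) * 0 + p = p := by ring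
    rw [hp]
    rfl
  | k + 1 => by
    show spow (spow x p) k * spow x p = spow x ((p + 1) * (k + 1) + p)
    rw [spow_nest x p k, spow_add]
    congr 1
    ring

lemma mulV_spow [Semigroup S] {U V : S} (h : U * V = V * V) :
    ∀ k, U * spow V k = spow V (k + 1)
  | 0 => h
  | k + 1 => by
    rw [spow_succ' V k, ← mul_assoc, h, mul_assoc, ← spow_succ' V k, ← spow_succ' V (k + 1)]

lemma spowU_spowV [Semigroup S] {U V : S} (h : U * V = V * V) :
    ∀ s k, spow U s * spow V k = spow V (s + k + 1)
  | 0, k => by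
    show U * spow V k = spow V (0 + k + 1)
    rw [mulV_spow h k]
    congr 1
    omega
  | s + 1, k => by
    show spow U s * U * spow V k = _
    rw [mul_assoc, mulV_spow h k, spowU_spowV h s (k + 1)]
    congr 1
    omega

lemma eomega_fix [Epigroup S] (x : S) :
    ∃ n : ℕ, ∀ t, n ≤ t → eomega x * spow x t = spow x t := by
  obtain ⟨n, hn⟩ := pinv_spow x
  refine ⟨n + 1, ?_⟩
  have base : eomega x * spow x (n + 1) = spow x (n + 1) := by
    rw [eomega, mul_assoc, hn, ← spow_succ']
  intro t ht
  induction t, ht using Nat.le_induction with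
  | base => exact base
  | succ t ht ih =>
    show eomega x * (spow x t * x) = spow x t * x
    rw [← mul_assoc, ih]

lemma pump [Semigroup S] {a : S} (ha : IsGroupElement a) :
    ∀ k : ℕ, ∃ d : S, a = spow a k * d := by
  obtain ⟨H, e, haH, heH, hmul, hid, hinv⟩ := ha
  obtain ⟨c, hcH, hac, hca⟩ := hinv a haH
  suffices hs : ∀ k : ℕ, ∃ d ∈ H, a = spow a k * d by
    intro k; obtain ⟨d, _, hd⟩ := hs k; exact ⟨d, hd⟩
  intro k
  induction k with
  | zero => exact ⟨e, heH, ((hid a haH).2).symm⟩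
  | succ k ih =>
    obtain ⟨d, hdH, hd⟩ := ih
    refine ⟨c * d, hmul c hcH d hdH, ?_⟩
    have h1 : a * (c * d) = d := by
      rw [← mul_assoc, hac, (hid d hdH).1]
    show a = spow a k * a * (c * d)
    rw [mul_assoc, h1]
    exact hd

end AuxLemmas

/-- If `U V = V²` and `U^m`, `V^m` are group elements, then
`U^ω V^s = V^s` for all `s ≥ m`. -/
theorem stmt13 {S : Type*} [Epigroup S] (U V : S) (h : U * V = V * V)
    (m : ℕ) (hm : 1 ≤ m) (hU : IsGroupElement (spow U (m - 1)))
    (hV : IsGroupElement (spow V (m - 1))) :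
    ∀ s : ℕ, m ≤ s → eomega U * spow V (s - 1) = spow V (s - 1) := by
  intro s hs
  obtain ⟨n, hn⟩ := eomega_fix U
  set t := s - 1 with ht
  have htm : m - 1 ≤ t := by omega
  obtain ⟨d, hd⟩ := pump hV (n + 1)
  set K := m * (n + 1) with hK
  have hnest : spow (spow V (m - 1)) (n + 1) = spow V (K + (m - 1)) := by
    rw [spow_nest]
    congr 1
    have : m - 1 + 1 = m := by omega
    rw [this]
  have hd' : spow V (m - 1) = spow V (K + (m - 1)) * d := by rw [← hnest]; exact hd
  have hK1 : n + 1 ≤ K := Nat.le_mul_of_pos_left (n + 1) (by omega)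
  have key : spow V t = spow V (t + K) * d := by
    obtain ⟨j, hj⟩ := Nat.exists_eq_add_of_le htm
    cases j with
    | zero =>
      have h0 : t = m - 1 := by omega
      have h1 : m - 1 + K = K + (m - 1) := by omega
      rw [h0, h1]; exact hd'
    | succ j =>
      have h1 : spow V j * spow V (m - 1) = spow V t := by
        rw [spow_add]; congr 1; omega
      rw [← h1, hd', ← mul_assoc, spow_add]
      congr 2
      omega
  have hVU : spow V (t + K) = spow U (t + K - 1) * spow V 0 := by
    rw [spowU_spowV h]
    congr 1
    omega
  have hr : n ≤ t + K - 1 := by omega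
  calc eomega U * spow V t = eomega U * (spow V (t + K) * d) := by rw [← key]
    _ = eomega U * spow V (t + K) * d := by rw [mul_assoc]
    _ = eomega U * (spow U (t + K - 1) * spow V 0) * d := by rw [hVU]
    _ = eomega U * spow U (t + K - 1) * spow V 0 * d := by rw [← mul_assoc (eomega U)]
    _ = spow U (t + K - 1) * spow V 0 * d := by rw [hn _ hr]
    _ = spow V (t + K) * d := by rw [← hVU]
    _ = spow V t := key.symm
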